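/- Let B₁,…,B_l be elements of an associative algebra with [B_i, B_j] = c_{ij}·1 for scalar constants c_{ij}. Then for any indices h, k and j₁,…,j_m, [B_h ⋄ B_k, Sym_m(B_{j₁},…,B_{j_m})] = Σ_{r=1}^{m} ( c_{h j_r} Sym_m(B_k, B_{j₁},…,B̂_{j_r},…,B_{j_m}) + c_{k j_r} Sym_m(B_h, B_{j₁},…,B̂_{j_r},…,B_{j_m}) ), where B̂_{j_r} denotes omission. -/

import Mathlib

/-!
If every commutator `brk a (f i)` is central, `brk a` acts on the unnormalised symmetrisation
`symSum f = ∑ σ, f (σ 0) ⋯ f (σ (n-1))` as a derivation with central values. Expanding `symSum`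
along its first factor and inducting on the length gives
`brk a (symP f) = ∑ r, brk a (f r) * symP (f without r)`, where the inductive step exchanges the two
removed factors by the involution `(i, j) ↦ (i.succAbove j, j.predAbove i)`; moving `a` to
either end at the cost of these commutators then gives `dia a (symP f) = symP (a :: f)`. The theorem
follows from `brk (dia a b) x = dia a (brk b x) + dia b (brk a x)`.
-/

/-- Commutator in an associative ring. -/
def brk {A : Type*} [Ring A] (a b : A) : A := a * b - b * a

/-- Symmetrized product of two elements. -/
def dia {A : Type*} [Ring A] [Algebra ℚ A] (a b : A) : A := (2⁻¹ : ℚ) • (a * b + b * a)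

/-- Fully symmetrized product of a list of elements: the average of the products
over all orderings of the list. -/
def symP {A : Type*} [Ring A] [Algebra ℚ A] (L : List A) : A :=
  ((L.length.factorial : ℚ)⁻¹) • ((L.permutations.map List.prod).sum)

section

variable {α β : Type*} [AddCommMonoid β]

theorem List.sum_map_permutations'_cons (a : α) (l : List α) (F : List α → β) :
    ((a :: l).permutations'.map F).sum =
      (l.permutations'.map fun t => ((t.permutations'Aux a).map F).sum).sum := by
  simp [List.permutations', List.flatMap, List.sum_flatten, List.map_flatten, Function.comp_def]

theorem List.ofFn_removeNth_succ {n : ℕ} (f : Fin (n + 2) → α) (s : Fin (n + 1)) :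
    List.ofFn (Fin.removeNth s.succ f) = f 0 :: List.ofFn (Fin.removeNth s (Fin.tail f)) := by
  simp only [List.ofFn_succ, Fin.removeNth_apply, Fin.succ_succAbove_zero, Fin.succ_succAbove_succ]
  rfl

theorem List.ofFn_eraseIdx {n : ℕ} (f : Fin (n + 1) → α) (r : Fin (n + 1)) :
    (List.ofFn f).eraseIdx r = List.ofFn (Fin.removeNth r f) := by
  induction n with
  | zero => simp [Fin.fin_one_eq_zero r]
  | succ n ih =>
    cases r using Fin.cases with
    | zero => simp [List.ofFn_succ, Fin.tail_def]
    | succ s => rw [List.ofFn_removeNth_succ, ← ih, List.ofFn_succ]; rfl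

theorem List.sum_map_permutations'_ofFn {n : ℕ} (f : Fin (n + 1) → α) (F : List α → β) :
    ((List.ofFn f).permutations'.map F).sum =
      ∑ r, ((List.ofFn (Fin.removeNth r f)).permutations'.map fun t => F (f r :: t)).sum := by
  induction n generalizing F with
  | zero => simp [List.permutations', List.permutations'Aux]
  | succ n ih =>
    rw [Fin.sum_univ_succ, Fin.removeNth_zero, List.ofFn_succ, List.sum_map_permutations'_cons,
      ← Fin.tail_def, ih]
    simp only [List.permutations'Aux, List.map_cons, List.sum_cons, List.map_map,
      List.sum_map_add, Finset.sum_add_distrib, List.ofFn_removeNth_succ,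
      List.sum_map_permutations'_cons]
    rw [← ih (Fin.tail f) (fun t => F (f 0 :: t))]
    rfl

theorem Fin.sum_sum_removeNth_swap {n : ℕ} (m : Fin (n + 2) → α) (Φ : α → α → (Fin n → α) → β) :
    ∑ i, ∑ j, Φ (m i) (Fin.removeNth i m j) (Fin.removeNth j (Fin.removeNth i m)) =
      ∑ i, ∑ j, Φ (Fin.removeNth i m j) (m i) (Fin.removeNth j (Fin.removeNth i m)) := by
  rw [← Fintype.sum_prod_type', ← Fintype.sum_prod_type']
  refine Fintype.sum_bijective (fun p => (p.1.succAbove p.2, p.2.predAbove p.1))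
    (Function.Involutive.bijective fun p => ?_) _ _ fun p => ?_
  · exact Prod.ext (Fin.succAbove_succAbove_predAbove _ _) (Fin.predAbove_predAbove_succAbove _ _)
  · simp only [Fin.removeNth_apply, Fin.succAbove_succAbove_predAbove,
      Fin.removeNth_removeNth_eq_swap m p.2 p.1]

end

section

variable {A : Type*} [Ring A]

def symSum {n : ℕ} (f : Fin n → A) : A := ((List.ofFn f).permutations.map List.prod).sum

theorem symSum_zero (f : Fin 0 → A) : symSum f = 1 := by
  simp [symSum]

theorem symSum_succ {n : ℕ} (f : Fin (n + 1) → A) :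
    symSum f = ∑ r, f r * symSum (Fin.removeNth r f) := by
  simp only [symSum, ((List.permutations_perm_permutations' _).map _).sum_eq,
    List.sum_map_permutations'_ofFn, List.prod_cons, List.sum_map_mul_left]

theorem brk_mul_right (a x y : A) : brk a (x * y) = brk a x * y + x * brk a y := by
  simp only [brk]; noncomm_ring

theorem brk_sum_right {ι : Type*} (a : A) (s : Finset ι) (f : ι → A) :
    brk a (∑ i ∈ s, f i) = ∑ i ∈ s, brk a (f i) := by
  simp only [brk, Finset.mul_sum, Finset.sum_mul, Finset.sum_sub_distrib]

theorem brk_symSum {n : ℕ} (a : A) (f : Fin (n + 1) → A) (hf : ∀ i x, Commute (brk a (f i)) x) :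
    brk a (symSum f) = (n + 1) • ∑ r, brk a (f r) * symSum (Fin.removeNth r f) := by
  induction n with
  | zero => simp [symSum_succ, symSum_zero]
  | succ n ih =>
    set X := ∑ r, brk a (f r) * symSum (Fin.removeNth r f) with hX
    have hswap : ∑ r, ∑ s, f r * (brk a (Fin.removeNth r f s) *
        symSum (Fin.removeNth s (Fin.removeNth r f))) = X := calc
      _ = ∑ r, ∑ s, brk a (Fin.removeNth r f s) *
          (f r * symSum (Fin.removeNth s (Fin.removeNth r f))) := by
        simp only [← mul_assoc, (hf _ (f _)).eq, Fin.removeNth_apply]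
      _ = ∑ r, ∑ s, brk a (f r) *
          (Fin.removeNth r f s * symSum (Fin.removeNth s (Fin.removeNth r f))) :=
        Fin.sum_sum_removeNth_swap f fun x y g => brk a y * (x * symSum g)
      _ = X := by simp only [← Finset.mul_sum, ← symSum_succ, hX]
    calc brk a (symSum f)
        = X + ∑ r, f r * brk a (symSum (Fin.removeNth r f)) := by
          rw [symSum_succ, brk_sum_right]
          simp only [brk_mul_right, Finset.sum_add_distrib, hX]
      _ = X + (n + 1) • X := by
          simp only [fun r => ih (Fin.removeNth r f) fun i => hf _, mul_smul_comm,
            ← Finset.smul_sum, Finset.mul_sum, hswap]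
      _ = (n + 1 + 1) • X := by rw [add_comm, ← succ_nsmul]

theorem two_nsmul_symSum_cons {n : ℕ} (a : A) (g : Fin n → A)
    (hg : ∀ i x, Commute (brk a (g i)) x) :
    2 • symSum (Fin.cons a g : Fin (n + 1) → A) = (n + 1) • (a * symSum g + symSum g * a) := by
  induction n with
  | zero => simp [symSum_succ, symSum_zero, two_mul]
  | succ n ih =>
    have hcomm (s : Fin (n + 1)) : g s * a = a * g s - brk a (g s) := by simp only [brk]; abel
    have hrm (s : Fin (n + 1)) : Fin.removeNth s.succ (Fin.cons a g : Fin (n + 2) → A) =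
        Fin.cons a (Fin.removeNth s g) :=
      Fin.cons_comp_succ_succAbove a g s
    calc 2 • symSum (Fin.cons a g : Fin (n + 2) → A)
        = 2 • (a * symSum g) +
            ∑ s, g s * 2 • symSum (Fin.cons a (Fin.removeNth s g) : Fin (n + 1) → A) := by
          rw [symSum_succ, Fin.sum_univ_succ]
          simp only [Fin.cons_zero, Fin.cons_succ, Fin.removeNth_zero, Fin.tail_cons, smul_add,
            Finset.smul_sum, mul_smul_comm, hrm]
      _ = 2 • (a * symSum g) + (n + 1) • ∑ s, (g s * a * symSum (Fin.removeNth s g) +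
            g s * symSum (Fin.removeNth s g) * a) := by
          simp only [fun s => ih (Fin.removeNth s g) fun i => hg _, mul_smul_comm, Finset.smul_sum,
            mul_add, mul_assoc]
      _ = 2 • (a * symSum g) + (n + 1) • (a * symSum g + symSum g * a -
            ∑ s, brk a (g s) * symSum (Fin.removeNth s g)) := by
          simp only [hcomm, sub_mul, mul_assoc a, Finset.sum_add_distrib, Finset.sum_sub_distrib,
            ← Finset.mul_sum, ← Finset.sum_mul, ← symSum_succ, sub_add_eq_add_sub]
      _ = (n + 1 + 1) • (a * symSum g + symSum g * a) := by
          rw [smul_sub, ← brk_symSum a g hg, brk]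
          module
end

section

variable {A : Type*} [Ring A] [Algebra ℚ A]

theorem symP_ofFn {n : ℕ} (f : Fin n → A) :
    symP (List.ofFn f) = (n.factorial : ℚ)⁻¹ • symSum f := by
  simp [symP, symSum]

theorem brk_smul_right (a : A) (q : ℚ) (x : A) : brk a (q • x) = q • brk a x := by
  simp only [brk, mul_smul_comm, smul_mul_assoc, smul_sub]

theorem brk_dia (a b x : A) : brk (dia a b) x = dia a (brk b x) + dia b (brk a x) := by
  simp only [brk, dia, smul_mul_assoc, mul_smul_comm, ← smul_add, ← smul_sub]
  congr 1
  noncomm_ring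

theorem dia_sum_right {ι : Type*} (a : A) (s : Finset ι) (f : ι → A) :
    dia a (∑ i ∈ s, f i) = ∑ i ∈ s, dia a (f i) := by
  simp only [dia, Finset.mul_sum, Finset.sum_mul, ← Finset.sum_add_distrib, Finset.smul_sum]

theorem dia_smul_right (a : A) (q : ℚ) (x : A) : dia a (q • x) = q • dia a x := by
  simp only [dia, mul_smul_comm, smul_mul_assoc, ← smul_add, smul_comm q]

theorem brk_symP_ofFn {n : ℕ} (a : A) (f : Fin (n + 1) → A) (hf : ∀ i x, Commute (brk a (f i)) x) :
    brk a (symP (List.ofFn f)) = ∑ r, brk a (f r) * symP (List.ofFn (Fin.removeNth r f)) := by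
  simp only [symP_ofFn, brk_smul_right, brk_symSum a f hf, mul_smul_comm, ← Finset.smul_sum,
    Nat.factorial_succ, Nat.cast_mul, ← Nat.cast_smul_eq_nsmul ℚ, smul_smul]
  congr 1
  have : (n.factorial : ℚ) ≠ 0 := by positivity
  field_simp

theorem dia_symP_ofFn {n : ℕ} (a : A) (g : Fin n → A) (hg : ∀ i x, Commute (brk a (g i)) x) :
    dia a (symP (List.ofFn g)) = symP (a :: List.ofFn g) := by
  have h2 : (2 : ℚ) • symSum (Fin.cons a g : Fin (n + 1) → A) =
      ((n + 1 : ℕ) : ℚ) • (a * symSum g + symSum g * a) := by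
    rw [Nat.cast_smul_eq_nsmul, ← two_nsmul_symSum_cons a g hg, ofNat_smul_eq_nsmul]
  rw [← List.ofFn_cons, symP_ofFn, symP_ofFn, dia_smul_right, dia, smul_smul,
    ← inv_smul_smul₀ (two_ne_zero' ℚ) (symSum (Fin.cons a g : Fin (n + 1) → A)), h2, smul_smul,
    smul_smul, Nat.factorial_succ]
  congr 1
  have : (n.factorial : ℚ) ≠ 0 := by positivity
  field_simp
  push_cast
  ring

end

theorem stmt12_general {A : Type*} [Ring A] [Algebra ℚ A] {l m : ℕ}
    (B : Fin l → A) (c : Fin l → Fin l → ℚ)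
    (hc : ∀ i j, brk (B i) (B j) = c i j • (1 : A))
    (h k : Fin l) (j : Fin m → Fin l) :
    brk (dia (B h) (B k)) (symP (List.ofFn fun i => B (j i)))
      = ∑ r : Fin m,
          (c h (j r) • symP (B k :: (List.ofFn fun i => B (j i)).eraseIdx r)
            + c k (j r) • symP (B h :: (List.ofFn fun i => B (j i)).eraseIdx r)) := by
  have central (i i' : Fin l) (x : A) : Commute (brk (B i) (B i')) x := by
    rw [hc]; exact (Commute.one_left x).smul_left _
  rcases m with _ | n
  · simp [symP, brk]
  · simp only [List.ofFn_eraseIdx, brk_dia, brk_symP_ofFn _ _ fun _ => central _ _, hc,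
      smul_one_mul, dia_sum_right, dia_smul_right,
      dia_symP_ofFn (B _) (Fin.removeNth _ fun i => B (j i)) fun _ => central _ _,
      Finset.sum_add_distrib, add_comm]

theorem stmt12 {A : Type*} [Ring A] [Algebra ℚ A] {l m : ℕ}
    (B : Fin l → A) (c : Fin l → Fin l → ℚ)
    (hanti : ∀ i j, c i j = - c j i)
    (hc : ∀ i j, brk (B i) (B j) = c i j • (1 : A))
    (h k : Fin l) (j : Fin m → Fin l) :
    brk (dia (B h) (B k)) (symP (List.ofFn fun i => B (j i)))
      = ∑ r : Fin m,
          (c h (j r) • symP (B k :: (List.ofFn fun i => B (j i)).eraseIdx r)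
            + c k (j r) • symP (B h :: (List.ofFn fun i => B (j i)).eraseIdx r)) :=
  stmt12_general B c hc h k j
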